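/- The quotient of the Lie group S³ × S¹ by the action of the cyclic group generated by the map α(g, z) = (gj, zi) is diffeomorphic to S³ × S¹. More precisely, the diffeomorphism φ of S³ × S¹ defined by φ(g, e^{iθ}) = (g e^{-jθ}, e^{iθ}) conjugates α to the map β(g,z) = (g, zi), whose quotient (S³ × S¹)/⟨β⟩ is diffeomorphic to S³ × S¹. -/

import Mathlib

open Quaternion

/-- The quaternion unit `j`. -/
def qj : ℍ[ℝ] := ⟨0, 0, 1, 0⟩

/-- For `z = e^{iθ}` on the circle, `expNegJ z = e^{-jθ} = cos θ − j sin θ` is the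
quaternion `⟨z.re, 0, −z.im, 0⟩`. -/
def expNegJ (z : ℂ) : ℍ[ℝ] := ⟨z.re, 0, -z.im, 0⟩

/-- The unit quaternions times the unit circle, `S³ × S¹ ⊂ ℍ × ℂ`. -/
def S3S1 : Set (ℍ[ℝ] × ℂ) := {p | ‖p.1‖ = 1 ∧ ‖p.2‖ = 1}

/-- The order-4 map `α(g, z) = (gj, zi)` on `S³ × S¹`. -/
noncomputable def alphaMap : ℍ[ℝ] × ℂ → ℍ[ℝ] × ℂ :=
  fun p => (p.1 * qj, p.2 * Complex.I)

/-- The order-4 map `β(g, z) = (g, zi)` on `S³ × S¹`. -/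
def betaMap : ℍ[ℝ] × ℂ → ℍ[ℝ] × ℂ :=
  fun p => (p.1, p.2 * Complex.I)

/-- The map `φ(g, e^{iθ}) = (g e^{-jθ}, e^{iθ})`. -/
noncomputable def phiMap : ℍ[ℝ] × ℂ → ℍ[ℝ] × ℂ :=
  fun p => (p.1 * expNegJ p.2, p.2)

/-! ### Auxiliary lemmas -/

lemma qj_mul_expNegJ (z : ℂ) : qj * expNegJ (z * Complex.I) = expNegJ z := by
  ext <;> simp [Quaternion.re_mul, Quaternion.imI_mul, Quaternion.imJ_mul, Quaternion.imK_mul] <;> simp [qj, expNegJ]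

lemma norm_expNegJ (z : ℂ) : ‖expNegJ z‖ = ‖z‖ := by
  rw [norm_eq_sqrt_real_inner, inner_self, Quaternion.normSq_def', Complex.norm_def,
    Complex.normSq_apply]
  congr 1
  simp [expNegJ, normSq_def']
  ring

lemma expNegJ_ne_zero {z : ℂ} (h : ‖z‖ = 1) : expNegJ z ≠ 0 := by
  intro h0
  have := norm_expNegJ z
  rw [h0, h] at this
  simp at this

lemma norm_qj : ‖qj‖ = 1 := by
  rw [norm_eq_sqrt_real_inner, inner_self, Quaternion.normSq_def']
  simp [qj, normSq_def']

lemma expNegJ_eq (z : ℂ) : expNegJ z = z.re • (1 : ℍ[ℝ]) - z.im • qj := by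
  ext <;> simp [Quaternion.re_smul, Quaternion.imI_smul, Quaternion.imJ_smul, Quaternion.imK_smul] <;> simp [expNegJ, qj]

lemma contDiff_expNegJ : ContDiff ℝ (⊤ : ℕ∞) expNegJ := by
  have : expNegJ = fun z : ℂ => z.re • (1 : ℍ[ℝ]) - z.im • qj := by
    funext z; exact expNegJ_eq z
  rw [this]
  exact (ContDiff.smul (Complex.reCLM.contDiff) contDiff_const).sub
    (ContDiff.smul (Complex.imCLM.contDiff) contDiff_const)

lemma continuous_expNegJ : Continuous expNegJ := contDiff_expNegJ.continuous

lemma qj_pow_mul_expNegJ (z : ℂ) : ∀ n : ℕ, qj ^ n * expNegJ (z * Complex.I ^ n) = expNegJ z := by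
  intro n
  induction n with
  | zero => simp
  | succ n ih =>
    rw [pow_succ, pow_succ, ← mul_assoc z, mul_assoc (qj ^ n), qj_mul_expNegJ, ih]

lemma beta_iter (n : ℕ) (p : ℍ[ℝ] × ℂ) : betaMap^[n] p = (p.1, p.2 * Complex.I ^ n) := by
  induction n with
  | zero => simp
  | succ n ih => rw [Function.iterate_succ_apply', ih, betaMap, pow_succ, mul_assoc]

lemma alpha_iter (n : ℕ) (p : ℍ[ℝ] × ℂ) :
    alphaMap^[n] p = (p.1 * qj ^ n, p.2 * Complex.I ^ n) := by
  induction n with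
  | zero => simp
  | succ n ih =>
    rw [Function.iterate_succ_apply', ih, alphaMap, pow_succ, pow_succ, mul_assoc, mul_assoc]

/-- Fourth roots of unity in `ℂ` are powers of `I`. -/
lemma fourth_root_eq_I_pow {w : ℂ} (hw : w ^ 4 = 1) : ∃ n : ℕ, w = Complex.I ^ n := by
  have h0 : (w - 1) * ((w + 1) * ((w - Complex.I) * (w + Complex.I))) = 0 := by
    linear_combination hw + (1 - w ^ 2) * Complex.I_sq
  rcases mul_eq_zero.1 h0 with h | h0
  · exact ⟨0, by rw [pow_zero]; linear_combination h⟩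
  rcases mul_eq_zero.1 h0 with h | h0
  · exact ⟨2, by rw [Complex.I_sq]; linear_combination h⟩
  rcases mul_eq_zero.1 h0 with h | h
  · exact ⟨1, by rw [pow_one]; linear_combination h⟩
  · refine ⟨3, ?_⟩
    have : Complex.I ^ 3 = -Complex.I := by
      rw [pow_succ, Complex.I_sq]; ring
    rw [this]; linear_combination h

/-- Every unit complex number has a fourth root on the circle. -/
lemma exists_fourth_root {w : ℂ} (hw : ‖w‖ = 1) : ∃ z : ℂ, ‖z‖ = 1 ∧ z ^ 4 = w := by
  refine ⟨Complex.exp ((w.arg / 4 : ℝ) * Complex.I), ?_, ?_⟩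
  · exact Complex.norm_exp_ofReal_mul_I _
  · rw [← Complex.exp_nat_mul]
    have h4 : ((4 : ℕ) : ℂ) * ((w.arg / 4 : ℝ) * Complex.I) = (w.arg : ℝ) * Complex.I := by
      push_cast; ring
    rw [h4]
    have := Complex.norm_mul_exp_arg_mul_I w
    rw [hw] at this
    simpa using this

instance : CompactSpace S3S1 := by
  rw [← isCompact_iff_compactSpace]
  have : S3S1 = (Metric.sphere (0 : ℍ[ℝ]) 1) ×ˢ (Metric.sphere (0 : ℂ) 1) := by
    ext p
    simp [S3S1, Set.mem_prod, mem_sphere_zero_iff_norm]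
  rw [this]
  exact (isCompact_sphere 0 1).prod (isCompact_sphere 0 1)

/-- The general gadget: a continuous map `F` whose restriction to `S3S1` has fibers exactly
the `f`-orbits descends to a homeomorphism from the quotient to `S3S1`. -/
lemma quotient_homeo_of_fibers (f F : ℍ[ℝ] × ℂ → ℍ[ℝ] × ℂ)
    (hFcont : Continuous F)
    (hfmaps : Set.MapsTo f S3S1 S3S1)
    (hFmaps : Set.MapsTo F S3S1 S3S1)
    (hFf : ∀ p ∈ S3S1, F (f p) = F p)
    (hinj : ∀ p ∈ S3S1, ∀ q ∈ S3S1, F p = F q → ∃ n : ℕ, q = f^[n] p)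
    (hsurj : Set.SurjOn F S3S1 S3S1)
    (s : Setoid S3S1)
    (hs : ∀ x y : S3S1, s.r x y ↔ ∃ n : ℕ, (y : ℍ[ℝ] × ℂ) = f^[n] x) :
    Nonempty (Quotient s ≃ₜ S3S1) := by
  have hFiter : ∀ (n : ℕ) (p : ℍ[ℝ] × ℂ), p ∈ S3S1 → F (f^[n] p) = F p := by
    intro n
    induction n with
    | zero => intro p _; rfl
    | succ n ih =>
      intro p hp
      rw [Function.iterate_succ_apply', hFf _ (hfmaps.iterate n hp), ih p hp]
  set F' : S3S1 → S3S1 := fun x => ⟨F x, hFmaps x.2⟩ with hF'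
  have hcompat : ∀ a b : S3S1, s.r a b → F' a = F' b := by
    intro a b hab
    obtain ⟨n, hn⟩ := (hs a b).1 hab
    apply Subtype.ext
    show F (a : ℍ[ℝ] × ℂ) = F (b : ℍ[ℝ] × ℂ)
    rw [hn, hFiter n _ a.2]
  set L : Quotient s → S3S1 := Quotient.lift F' hcompat with hL
  have hLcont : Continuous L :=
    Continuous.quotient_lift ((hFcont.comp continuous_subtype_val).subtype_mk _) hcompat
  have hLbij : Function.Bijective L := by
    constructor
    · intro a b hab
      induction a using Quotient.ind
      induction b using Quotient.ind
      rename_i a b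
      have : F (a : ℍ[ℝ] × ℂ) = F (b : ℍ[ℝ] × ℂ) := congrArg Subtype.val hab
      obtain ⟨n, hn⟩ := hinj _ a.2 _ b.2 this
      exact Quotient.sound ((hs a b).2 ⟨n, hn⟩)
    · intro y
      obtain ⟨x, hx, hxy⟩ := hsurj y.2
      exact ⟨Quotient.mk s ⟨x, hx⟩, Subtype.ext hxy⟩
  exact ⟨Continuous.homeoOfEquivCompactToT2 (f := Equiv.ofBijective L hLbij) hLcont⟩

/-- The quotient of `S³ × S¹` by the cyclic group generated by `α(g,z) = (gj, zi)` is
homeomorphic to `S³ × S¹`.  More precisely, the smooth bijection `φ` of `S³ × S¹` given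
by `φ(g, e^{iθ}) = (g e^{-jθ}, e^{iθ})` conjugates `α` to `β(g,z) = (g, zi)`, and the
quotient of `S³ × S¹` by the cyclic group generated by `β` is homeomorphic to
`S³ × S¹`; hence so is the quotient by the group generated by `α`. -/
theorem quotient_by_alpha_homeomorphic :
    (∀ p ∈ S3S1, phiMap (alphaMap p) = betaMap (phiMap p)) ∧
    ContDiff ℝ (⊤ : ℕ∞) phiMap ∧ Set.BijOn phiMap S3S1 S3S1 ∧
    (∀ s : Setoid S3S1,
      (∀ x y : S3S1, s.r x y ↔ ∃ n : ℕ, (y : ℍ[ℝ] × ℂ) = betaMap^[n] x) →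
      Nonempty (Quotient s ≃ₜ S3S1)) ∧
    (∀ s : Setoid S3S1,
      (∀ x y : S3S1, s.r x y ↔ ∃ n : ℕ, (y : ℍ[ℝ] × ℂ) = alphaMap^[n] x) →
      Nonempty (Quotient s ≃ₜ S3S1)) := by
  refine ⟨?_, ?_, ?_, ?_, ?_⟩
  · -- conjugation identity
    intro p _
    show (p.1 * qj * expNegJ (p.2 * Complex.I), p.2 * Complex.I)
        = (p.1 * expNegJ p.2, p.2 * Complex.I)
    rw [mul_assoc, qj_mul_expNegJ]
  · -- smoothness of φ
    exact (contDiff_fst.mul (contDiff_expNegJ.comp contDiff_snd)).prodMk contDiff_snd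
  · -- φ is a bijection of S³ × S¹
    refine ⟨?_, ?_, ?_⟩
    · intro p hp
      constructor
      · show ‖p.1 * expNegJ p.2‖ = 1
        rw [norm_mul, hp.1, norm_expNegJ, hp.2, mul_one]
      · exact hp.2
    · intro p hp q hq hpq
      have hpq' : (p.1 * expNegJ p.2, p.2) = (q.1 * expNegJ q.2, q.2) := hpq
      rw [Prod.mk.injEq] at hpq'
      obtain ⟨h1, h2⟩ := hpq'
      rw [h2] at h1
      have := mul_right_cancel₀ (expNegJ_ne_zero hq.2) h1
      exact Prod.ext this h2
    · intro q hq
      refine ⟨(q.1 * (expNegJ q.2)⁻¹, q.2), ⟨?_, hq.2⟩, ?_⟩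
      · rw [norm_mul, hq.1, norm_inv, norm_expNegJ, hq.2]; norm_num
      · show (q.1 * (expNegJ q.2)⁻¹ * expNegJ q.2, q.2) = q
        rw [mul_assoc, inv_mul_cancel₀ (expNegJ_ne_zero hq.2), mul_one]
  · -- quotient by β
    intro s hs
    refine quotient_homeo_of_fibers betaMap (fun p => (p.1, p.2 ^ 4)) ?_ ?_ ?_ ?_ ?_ ?_ s hs
    · exact continuous_fst.prodMk (continuous_snd.pow 4)
    · intro p hp
      constructor
      · exact hp.1
      · show ‖p.2 * Complex.I‖ = 1
        rw [norm_mul, hp.2, Complex.norm_I, mul_one]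
    · intro p hp
      constructor
      · exact hp.1
      · show ‖p.2 ^ 4‖ = 1
        rw [norm_pow, hp.2, one_pow]
    · intro p _
      show (p.1, (p.2 * Complex.I) ^ 4) = (p.1, p.2 ^ 4)
      rw [mul_pow, Complex.I_pow_four, mul_one]
    · intro p hp q hq hpq
      have hpq' : (p.1, p.2 ^ 4) = (q.1, q.2 ^ 4) := hpq
      rw [Prod.mk.injEq] at hpq'
      obtain ⟨h1, h2⟩ := hpq'
      have hz : p.2 ≠ 0 := by
        intro h0
        have h2' := hp.2
        rw [h0, norm_zero] at h2'
        exact zero_ne_one h2'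
      have hw : (q.2 / p.2) ^ 4 = 1 := by
        rw [div_pow, ← h2, div_self (pow_ne_zero _ hz)]
      obtain ⟨n, hn⟩ := fourth_root_eq_I_pow hw
      refine ⟨n, ?_⟩
      rw [beta_iter]
      refine Prod.ext h1.symm ?_
      show q.2 = p.2 * Complex.I ^ n
      rw [← hn, mul_comm, div_mul_cancel₀ _ hz]
    · intro q hq
      obtain ⟨z, hz1, hz4⟩ := exists_fourth_root hq.2
      exact ⟨(q.1, z), ⟨hq.1, hz1⟩, Prod.ext rfl hz4⟩
  · -- quotient by α
    intro s hs
    refine quotient_homeo_of_fibers alphaMap (fun p => (p.1 * expNegJ p.2, p.2 ^ 4))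
      ?_ ?_ ?_ ?_ ?_ ?_ s hs
    · exact (continuous_fst.mul (continuous_expNegJ.comp continuous_snd)).prodMk
        (continuous_snd.pow 4)
    · intro p hp
      constructor
      · show ‖p.1 * qj‖ = 1
        rw [norm_mul, hp.1, norm_qj, mul_one]
      · show ‖p.2 * Complex.I‖ = 1
        rw [norm_mul, hp.2, Complex.norm_I, mul_one]
    · intro p hp
      constructor
      · show ‖p.1 * expNegJ p.2‖ = 1
        rw [norm_mul, hp.1, norm_expNegJ, hp.2, mul_one]
      · show ‖p.2 ^ 4‖ = 1
        rw [norm_pow, hp.2, one_pow]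
    · intro p _
      show (p.1 * qj * expNegJ (p.2 * Complex.I), (p.2 * Complex.I) ^ 4)
          = (p.1 * expNegJ p.2, p.2 ^ 4)
      rw [mul_assoc, qj_mul_expNegJ, mul_pow, Complex.I_pow_four, mul_one]
    · intro p hp q hq hpq
      have hpq' : (p.1 * expNegJ p.2, p.2 ^ 4) = (q.1 * expNegJ q.2, q.2 ^ 4) := hpq
      rw [Prod.mk.injEq] at hpq'
      obtain ⟨h1, h2⟩ := hpq'
      have hz : p.2 ≠ 0 := by
        intro h0
        have h2' := hp.2
        rw [h0, norm_zero] at h2'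
        exact zero_ne_one h2'
      have hw : (q.2 / p.2) ^ 4 = 1 := by
        rw [div_pow, ← h2, div_self (pow_ne_zero _ hz)]
      obtain ⟨n, hn⟩ := fourth_root_eq_I_pow hw
      have hz2 : q.2 = p.2 * Complex.I ^ n := by
        rw [← hn, mul_comm, div_mul_cancel₀ _ hz]
      refine ⟨n, ?_⟩
      rw [alpha_iter]
      refine Prod.ext ?_ hz2
      -- need q.1 = p.1 * qj ^ n
      have key : qj ^ n * expNegJ q.2 = expNegJ p.2 := by
        rw [hz2]; exact qj_pow_mul_expNegJ p.2 n
      have h1' : q.1 * expNegJ q.2 = (p.1 * qj ^ n) * expNegJ q.2 := by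
        rw [mul_assoc, key, ← h1]
      exact mul_right_cancel₀ (expNegJ_ne_zero hq.2) h1'
    · intro q hq
      obtain ⟨z, hz1, hz4⟩ := exists_fourth_root hq.2
      refine ⟨(q.1 * (expNegJ z)⁻¹, z), ⟨?_, hz1⟩, ?_⟩
      · rw [norm_mul, hq.1, norm_inv, norm_expNegJ, hz1]; norm_num
      · show (q.1 * (expNegJ z)⁻¹ * expNegJ z, z ^ 4) = q
        rw [mul_assoc, inv_mul_cancel₀ (expNegJ_ne_zero hz1), mul_one, hz4]
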